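/- Let X and Y be compact subsets of ℝ^d, let μ be a Borel probability measure on X, and let T : X → Y be continuous. For each k, let π_k be a finitely supported probability measure on X × Y whose support projects to a finite set X_k ⊆ X, and write μ_k for the first marginal of π_k. Define the barycentric projection of π_k as the finitely supported measure π̄_k = Σ_{x ∈ X_k} μ_k({x}) δ_{(x, ȳ_k(x))}, where for each x ∈ X_k with μ_k({x}) > 0, ȳ_k(x) = (1/μ_k({x})) Σ_{y : (x,y) ∈ supp π_k} π_k({(x,y)}) · y is the weighted Euclidean barycenter of the targets of x under π_k. If π_k converges weakly to the measure (id, T)_* μ (the pushforward of μ under x ↦ (x, T(x))), then π̄_k also converges weakly to (id, T)_* μ; in particular, the second marginal of π̄_k converges weakly to the pushforward measure T_* μ. -/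

import Mathlib

/-!
Extend `T` to a continuous `g` on all of `ℝ^d` (Tietze). The function `dist y (g x)` is bounded
on the compact set `X × Y` and vanishes on the graph of `T`, so weak convergence of the plans
gives `∫ dist y (g x) dπ_k → 0`. By Jensen's inequality for the convex function `dist · (g x)`,
moving the mass above each `x` to its barycenter costs at most this much:
`Σ_x μ_k{x} · dist (ȳ_k x) (g x) ≤ ∫ dist y (g x) dπ_k`. Hence against an `L`-Lipschitz test
function, `π̄_k` and the push-forward of `π_k` to the graph of `g` differ by at most `L` times a
null sequence, while the latter converge to `(id, T)_* μ`. Bounded Lipschitz functions suffice to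
test weak convergence of probability measures, and the second marginals follow by continuous
mapping.
-/

open MeasureTheory Filter Topology Finset

noncomputable section

/-- Weak convergence of a sequence of measures: the integrals of every bounded
continuous function converge. -/
def WeakConvSeq {α : Type*} [MeasurableSpace α] [TopologicalSpace α]
    (μs : ℕ → Measure α) (μ : Measure α) : Prop :=
  ∀ f : BoundedContinuousFunction α ℝ,
    Tendsto (fun k => ∫ x, f x ∂(μs k)) atTop (𝓝 (∫ x, f x ∂μ))

/-- The finitely supported measure `Σ_{q ∈ S} w(q) δ_q` on `ℝ^d × ℝ^d`
determined by a finite set `S` of points with weights `w`. -/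
def discretePlanMeasure {d : ℕ} (S : Finset ((Fin d → ℝ) × (Fin d → ℝ)))
    (w : (Fin d → ℝ) × (Fin d → ℝ) → NNReal) : Measure ((Fin d → ℝ) × (Fin d → ℝ)) :=
  ∑ q ∈ S, ((w q : ENNReal) • Measure.dirac q)

/-- The mass `μ({x})` that the first marginal of the discrete plan gives to the
point `x`. -/
def atomMass {d : ℕ} (S : Finset ((Fin d → ℝ) × (Fin d → ℝ)))
    (w : (Fin d → ℝ) × (Fin d → ℝ) → NNReal) (x : Fin d → ℝ) : NNReal :=
  ∑ q ∈ S.filter (fun q => q.1 = x), w q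

/-- The weighted Euclidean barycenter `ȳ(x)` of the targets of the point `x`
under the discrete plan `(S, w)`:
`ȳ(x) = (Σ_{y : (x,y) ∈ S} w(x,y) · y) / μ({x})`. -/
def baryTarget {d : ℕ} (S : Finset ((Fin d → ℝ) × (Fin d → ℝ)))
    (w : (Fin d → ℝ) × (Fin d → ℝ) → NNReal) (x : Fin d → ℝ) : Fin d → ℝ :=
  ((atomMass S w x : ℝ))⁻¹ • ∑ q ∈ S.filter (fun q => q.1 = x), (w q : ℝ) • q.2

/-- The barycentric projection `π̄ = Σ_x μ({x}) δ_{(x, ȳ(x))}` of the discrete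
plan `(S, w)`, where `x` ranges over the projection of the support onto the
first factor. -/
def baryProjection {d : ℕ} (S : Finset ((Fin d → ℝ) × (Fin d → ℝ)))
    (w : (Fin d → ℝ) × (Fin d → ℝ) → NNReal) : Measure ((Fin d → ℝ) × (Fin d → ℝ)) :=
  ∑ x ∈ S.image Prod.fst, ((atomMass S w x : ENNReal) • Measure.dirac (x, baryTarget S w x))

open scoped NNReal ENNReal BoundedContinuousFunction

section WeakConvSeq

variable {Ω : Type*} [MeasurableSpace Ω]

theorem WeakConvSeq.map [TopologicalSpace Ω] [OpensMeasurableSpace Ω] {Ω' : Type*}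
    [MeasurableSpace Ω'] [TopologicalSpace Ω'] [BorelSpace Ω'] {μs : ℕ → Measure Ω}
    {μ : Measure Ω} (h : WeakConvSeq μs μ) {φ : Ω → Ω'} (hφ : Continuous φ) :
    WeakConvSeq (fun k => (μs k).map φ) (μ.map φ) := by
  intro f
  have hint (ν : Measure Ω) : ∫ y, f y ∂ν.map φ = ∫ x, f.compContinuous ⟨φ, hφ⟩ x ∂ν :=
    integral_map hφ.aemeasurable f.continuous.aestronglyMeasurable
  simpa only [hint] using h (f.compContinuous ⟨φ, hφ⟩)

theorem WeakConvSeq.tendsto_integral_of_isCompact [TopologicalSpace Ω] {μs : ℕ → Measure Ω}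
    {μ : Measure Ω} (h : WeakConvSeq μs μ) {F : Ω → ℝ} (hF : Continuous F) {K : Set Ω}
    (hK : IsCompact K) (hμs : ∀ k, ∀ᵐ x ∂μs k, x ∈ K) (hμ : ∀ᵐ x ∂μ, x ∈ K) :
    Tendsto (fun k => ∫ x, F x ∂μs k) atTop (𝓝 (∫ x, F x ∂μ)) := by
  obtain ⟨C, hC⟩ := hK.exists_bound_of_continuousOn hF.continuousOn
  set M := max C 0
  have hFM (x : Ω) (hx : x ∈ K) : |F x| ≤ M := (hC x hx).trans (le_max_left _ _)
  let Fb : Ω →ᵇ ℝ := .ofNormedAddCommGroup (fun x => max (-M) (min (F x) M))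
    (continuous_const.max (hF.min continuous_const)) M fun x =>
      abs_le.2 ⟨le_max_left _ _, max_le (by linarith [le_max_right C 0]) (min_le_right _ _)⟩
  have hFb (ν : Measure Ω) (hν : ∀ᵐ x ∂ν, x ∈ K) : ∫ x, Fb x ∂ν = ∫ x, F x ∂ν := by
    refine integral_congr_ae (hν.mono fun x hx => ?_)
    obtain ⟨hlow, hup⟩ := abs_le.1 (hFM x hx)
    simp [Fb, min_eq_left hup, max_eq_right hlow]
  rw [← hFb μ hμ]
  exact (h Fb).congr fun k => hFb (μs k) (hμs k)

theorem weakConvSeq_of_forall_lipschitzWith [PseudoMetricSpace Ω] [OpensMeasurableSpace Ω]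
    {μs : ℕ → Measure Ω} [∀ k, IsProbabilityMeasure (μs k)] {μ : Measure Ω}
    [IsProbabilityMeasure μ]
    (h : ∀ (f : Ω →ᵇ ℝ) (L : ℝ≥0), LipschitzWith L f →
      Tendsto (fun k => ∫ x, f x ∂μs k) atTop (𝓝 (∫ x, f x ∂μ))) :
    WeakConvSeq μs μ := by
  let P : ℕ → ProbabilityMeasure Ω := fun k => ⟨μs k, inferInstance⟩
  let P₀ : ProbabilityMeasure Ω := ⟨μ, inferInstance⟩
  have hP : Tendsto P atTop (𝓝 P₀) :=
    tendsto_iff_forall_lipschitz_integral_tendsto.2 fun f ⟨C, hC⟩ ⟨L, hL⟩ =>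
      h ⟨⟨f, hL.continuous⟩, C, hC⟩ L hL
  exact ProbabilityMeasure.tendsto_iff_forall_integral_tendsto.1 hP

end WeakConvSeq

theorem integral_finset_sum_smul_dirac {ι α : Type*} [MeasurableSpace α]
    [MeasurableSingletonClass α] (s : Finset ι) (c : ι → ℝ≥0) (a : ι → α) (f : α → ℝ) :
    ∫ x, f x ∂(∑ i ∈ s, (c i : ℝ≥0∞) • Measure.dirac (a i)) = ∑ i ∈ s, c i * f (a i) := by
  rw [integral_finsetSum_measure fun i _ =>
    (integrable_dirac (by simp)).smul_measure ENNReal.coe_ne_top]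
  simp [integral_dirac, NNReal.smul_def]

section DiscretePlan

variable {d : ℕ} (S : Finset ((Fin d → ℝ) × (Fin d → ℝ)))
  (w : (Fin d → ℝ) × (Fin d → ℝ) → ℝ≥0)

theorem integral_discretePlanMeasure (f : (Fin d → ℝ) × (Fin d → ℝ) → ℝ) :
    ∫ p, f p ∂discretePlanMeasure S w = ∑ q ∈ S, w q * f q :=
  integral_finset_sum_smul_dirac S w id f

theorem integral_baryProjection (f : (Fin d → ℝ) × (Fin d → ℝ) → ℝ) :
    ∫ p, f p ∂baryProjection S w
      = ∑ x ∈ S.image Prod.fst, atomMass S w x * f (x, baryTarget S w x) :=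
  integral_finset_sum_smul_dirac _ _ _ f

theorem ae_mem_discretePlanMeasure {K : Set ((Fin d → ℝ) × (Fin d → ℝ))}
    (hS : ∀ q ∈ S, q ∈ K) : ∀ᵐ p ∂discretePlanMeasure S w, p ∈ K := by
  rw [ae_iff, discretePlanMeasure, Measure.finsetSum_apply]
  exact Finset.sum_eq_zero fun q hq => by simp [hS q hq]

theorem sum_atomMass_mul (h : (Fin d → ℝ) → ℝ) :
    ∑ x ∈ S.image Prod.fst, atomMass S w x * h x = ∑ q ∈ S, w q * h q.1 := by
  rw [← Finset.sum_fiberwise_of_maps_to (fun _ hq => Finset.mem_image_of_mem Prod.fst hq)]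
  refine Finset.sum_congr rfl fun x _ => ?_
  rw [atomMass, NNReal.coe_sum, Finset.sum_mul]
  exact Finset.sum_congr rfl fun q hq => by rw [(Finset.mem_filter.1 hq).2]

theorem sum_atomMass : ∑ x ∈ S.image Prod.fst, atomMass S w x = ∑ q ∈ S, w q :=
  NNReal.eq (by simpa using sum_atomMass_mul S w 1)

theorem isProbabilityMeasure_baryProjection (hw : ∑ q ∈ S, w q = 1) :
    IsProbabilityMeasure (baryProjection S w) := by
  constructor
  simp [baryProjection, Measure.finsetSum_apply, ← ENNReal.ofNNReal_finsetSum, sum_atomMass, hw]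

theorem atomMass_mul_dist_baryTarget_le (x c : Fin d → ℝ) :
    atomMass S w x * dist (baryTarget S w x) c
      ≤ ∑ q ∈ S.filter (fun q => q.1 = x), w q * dist q.2 c := by
  set F := S.filter (fun q => q.1 = x)
  have hmass : (atomMass S w x : ℝ) = ∑ q ∈ F, (w q : ℝ) := NNReal.coe_sum _ _
  rcases (atomMass S w x).coe_nonneg.eq_or_lt with h0 | hpos
  · rw [← h0, zero_mul]
    exact Finset.sum_nonneg fun q _ => by positivity
  have hbary : baryTarget S w x = F.centerMass (fun q => (w q : ℝ)) Prod.snd := by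
    rw [baryTarget, Finset.centerMass, hmass]
  have hjensen := (convexOn_dist c convex_univ).map_centerMass_le (t := F)
    (fun q _ => (w q).coe_nonneg) (hmass ▸ hpos) (fun q _ => Set.mem_univ q.2)
  calc (atomMass S w x : ℝ) * dist (baryTarget S w x) c
      ≤ atomMass S w x * F.centerMass (fun q => (w q : ℝ)) (fun q => dist q.2 c) := by
        rw [hbary]
        exact mul_le_mul_of_nonneg_left hjensen hpos.le
    _ = ∑ q ∈ F, w q * dist q.2 c := by
        rw [Finset.centerMass, smul_eq_mul, ← hmass, mul_inv_cancel_left₀ hpos.ne']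
        rfl

theorem sum_atomMass_mul_dist_baryTarget_le (G : (Fin d → ℝ) → Fin d → ℝ) :
    ∑ x ∈ S.image Prod.fst, atomMass S w x * dist (baryTarget S w x) (G x)
      ≤ ∑ q ∈ S, w q * dist q.2 (G q.1) :=
  calc ∑ x ∈ S.image Prod.fst, atomMass S w x * dist (baryTarget S w x) (G x)
      ≤ ∑ x ∈ S.image Prod.fst, ∑ q ∈ S.filter (fun q => q.1 = x), w q * dist q.2 (G q.1) :=
        Finset.sum_le_sum fun x _ => (atomMass_mul_dist_baryTarget_le S w x (G x)).trans_eq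
          (Finset.sum_congr rfl fun q hq => by rw [(Finset.mem_filter.1 hq).2])
    _ = ∑ q ∈ S, w q * dist q.2 (G q.1) :=
        Finset.sum_fiberwise_of_maps_to (fun _ hq => Finset.mem_image_of_mem Prod.fst hq) _

theorem dist_integral_baryProjection_le {f : (Fin d → ℝ) × (Fin d → ℝ) → ℝ} {L : ℝ≥0}
    (hf : LipschitzWith L f) (G : (Fin d → ℝ) → Fin d → ℝ) :
    dist (∫ p, f p ∂baryProjection S w) (∫ p, f (p.1, G p.1) ∂discretePlanMeasure S w)
      ≤ L * ∫ p, dist p.2 (G p.1) ∂discretePlanMeasure S w := by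
  have hlip (x y₁ y₂ : Fin d → ℝ) : |f (x, y₁) - f (x, y₂)| ≤ L * dist y₁ y₂ := by
    simpa [Real.dist_eq, dist_prod_same_left] using hf.dist_le_mul (x, y₁) (x, y₂)
  rw [integral_baryProjection, integral_discretePlanMeasure, integral_discretePlanMeasure,
    ← sum_atomMass_mul S w (fun x => f (x, G x)), Real.dist_eq, ← Finset.sum_sub_distrib]
  calc |∑ x ∈ S.image Prod.fst,
        (atomMass S w x * f (x, baryTarget S w x) - atomMass S w x * f (x, G x))|
      ≤ ∑ x ∈ S.image Prod.fst,
        |atomMass S w x * f (x, baryTarget S w x) - atomMass S w x * f (x, G x)| :=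
        Finset.abs_sum_le_sum_abs _ _
    _ ≤ ∑ x ∈ S.image Prod.fst, atomMass S w x * (L * dist (baryTarget S w x) (G x)) := by
        refine Finset.sum_le_sum fun x _ => ?_
        rw [← mul_sub, abs_mul, NNReal.abs_eq]
        exact mul_le_mul_of_nonneg_left (hlip _ _ _) (atomMass S w x).coe_nonneg
    _ = L * ∑ x ∈ S.image Prod.fst, atomMass S w x * dist (baryTarget S w x) (G x) := by
        rw [Finset.mul_sum]
        exact Finset.sum_congr rfl fun x _ => mul_left_comm _ _ _
    _ ≤ L * ∑ q ∈ S, w q * dist q.2 (G q.1) :=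
        mul_le_mul_of_nonneg_left (sum_atomMass_mul_dist_baryTarget_le S w G) L.coe_nonneg

end DiscretePlan

theorem weakConvSeq_baryProjection_of_tendsto_cost {d : ℕ}
    {S : ℕ → Finset ((Fin d → ℝ) × (Fin d → ℝ))} {w : ℕ → (Fin d → ℝ) × (Fin d → ℝ) → ℝ≥0}
    (hw : ∀ k, ∑ q ∈ S k, w k q = 1) {G : (Fin d → ℝ) → Fin d → ℝ} (hG : Measurable G)
    {ν : Measure ((Fin d → ℝ) × (Fin d → ℝ))} [IsProbabilityMeasure ν]
    (hgraph : WeakConvSeq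
      (fun k => (discretePlanMeasure (S k) (w k)).map fun p => (p.1, G p.1)) ν)
    (hcost : Tendsto (fun k => ∫ p, dist p.2 (G p.1) ∂discretePlanMeasure (S k) (w k))
      atTop (𝓝 0)) :
    WeakConvSeq (fun k => baryProjection (S k) (w k)) ν := by
  have := fun k => isProbabilityMeasure_baryProjection (S k) (w k) (hw k)
  refine weakConvSeq_of_forall_lipschitzWith fun f L hf => ?_
  have hψ : Measurable fun p : (Fin d → ℝ) × (Fin d → ℝ) => (p.1, G p.1) :=
    measurable_fst.prodMk (hG.comp measurable_fst)
  have hlim := hgraph f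
  simp only [integral_map hψ.aemeasurable f.continuous.aestronglyMeasurable] at hlim
  refine hlim.congr_dist (squeeze_zero (fun _ => dist_nonneg) (fun k => ?_)
    (by simpa using hcost.const_mul (L : ℝ)))
  rw [dist_comm]
  exact dist_integral_baryProjection_le (S k) (w k) hf G

/-- Convergence of barycentric projections: if the finitely supported plans
`π_k = discretePlanMeasure (S k) (w k)`, supported in `X × Y`, converge weakly
to `(id, T)_* μ` for a continuous `T : X → Y` and a Borel probability measure
`μ` on the compact set `X`, then the barycentric projections `π̄_k` also
converge weakly to `(id, T)_* μ`; in particular their second marginals converge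
weakly to `T_* μ`. -/
theorem baryProjection_weak_convergence
    {d : ℕ} (X Y : Set (Fin d → ℝ)) (hX : IsCompact X) (hY : IsCompact Y)
    (μ : Measure X) (hμ : IsProbabilityMeasure μ)
    (T : X → (Fin d → ℝ)) (hT : Continuous T) (hTY : ∀ x : X, T x ∈ Y)
    (S : ℕ → Finset ((Fin d → ℝ) × (Fin d → ℝ)))
    (w : ℕ → (Fin d → ℝ) × (Fin d → ℝ) → NNReal)
    (hS : ∀ k, ∀ q ∈ S k, q ∈ X ×ˢ Y)
    (hw1 : ∀ k, ∑ q ∈ S k, w k q = 1)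
    (hconv : WeakConvSeq (fun k => discretePlanMeasure (S k) (w k))
      (μ.map (fun x : X => ((x : Fin d → ℝ), T x)))) :
    WeakConvSeq (fun k => baryProjection (S k) (w k))
        (μ.map (fun x : X => ((x : Fin d → ℝ), T x))) ∧
      WeakConvSeq (fun k => (baryProjection (S k) (w k)).map Prod.snd)
        (μ.map T) := by
  obtain ⟨g, hg⟩ := ContinuousMap.exists_restrict_eq hX.isClosed ⟨T, hT⟩
  have hgT (x : X) : g x = T x := ContinuousMap.congr_fun hg x
  have hφ : Continuous fun x : X => ((x : Fin d → ℝ), T x) := continuous_subtype_val.prodMk hT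
  have hψ : Continuous fun p : (Fin d → ℝ) × (Fin d → ℝ) => (p.1, g p.1) :=
    continuous_fst.prodMk (g.continuous.comp continuous_fst)
  have hgraph : (μ.map fun x : X => ((x : Fin d → ℝ), T x)).map (fun p => (p.1, g p.1))
      = μ.map fun x : X => ((x : Fin d → ℝ), T x) := by
    rw [Measure.map_map hψ.measurable hφ.measurable]
    simp only [Function.comp_def, hgT]
  have hdist : Continuous fun p : (Fin d → ℝ) × (Fin d → ℝ) => dist p.2 (g p.1) :=
    continuous_snd.dist (g.continuous.comp continuous_fst)
  have hcost := hconv.tendsto_integral_of_isCompact hdist (hX.prod hY)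
    (fun k => ae_mem_discretePlanMeasure _ _ (hS k))
    ((ae_map_iff hφ.aemeasurable (hX.prod hY).isClosed.measurableSet).2
      (ae_of_all _ fun x => ⟨x.2, hTY x⟩))
  rw [integral_map hφ.aemeasurable hdist.aestronglyMeasurable] at hcost
  simp only [hgT, dist_self, integral_zero] at hcost
  have := Measure.isProbabilityMeasure_map (μ := μ) hφ.aemeasurable
  have hbary := weakConvSeq_baryProjection_of_tendsto_cost hw1 g.continuous.measurable
    (hgraph ▸ hconv.map hψ) hcost
  refine ⟨hbary, ?_⟩
  simpa [Measure.map_map measurable_snd hφ.measurable, Function.comp_def] using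
    hbary.map continuous_snd
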